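/- arXiv:2303.13136 — 4 statements merged into one kernel-verified Lean document; each statement's English description precedes it below -/
import Mathlib

section
/- For a continued fraction of the form p_1 z/(1 + q_1 z) − p_2 z²/(1 + q_2 z) − p_3 z²/(1 + q_3 z) − ⋯ (an A-fraction in one variable) whose n-th approximant is F^{(n)}(z), if the coefficients are obtained from a formal power series P(z) = Σ_{r≥1} c_r z^r by Gragg's algorithm under the assumption that all Hankel determinants H(n) = det(c_{i+j−1})_{1≤i,j≤n} are nonzero, then the Taylor expansion of F^{(n)} at 0 agrees with P through degree 2n; i.e. F^{(n)}(z) = Σ_{r=1}^{2n} c_r z^r + O(z^{2n+1}). -/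
/-- State of Gragg's algorithm at level `n`: `(B_{n−1}, B_n, σ_{n−1}, τ_{n−1})`
(the `B` polynomial-coefficient functions are extended by `0` to negative
arguments, and `B_n(0) = 1`). -/
structure GState where
  Bp : ℤ → ℂ
  Bc : ℤ → ℂ
  sp : ℂ
  tp : ℂ

/-- One step of Gragg's algorithm: from the data at level `n` compute
`σ_n = Σ_{r=0}^n c_{2n+1−r} B_n(r)`, `τ_n σ_n = Σ_{r=0}^n c_{2n+2−r} B_n(r)`,
`p_{n+1} = σ_n/σ_{n−1}`, `q_{n+1} = τ_{n−1} − τ_n`, and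
`B_{n+1}(r) = B_n(r) + q_{n+1} B_n(r−1) − p_{n+1} B_{n−1}(r−2)`. -/
noncomputable def gstep (c : ℕ → ℂ) (n : ℕ) (s : GState) : GState :=
  let sc : ℂ := ∑ r ∈ Finset.range (n + 1), c (2 * n + 1 - r) * s.Bc r
  let tc : ℂ := (∑ r ∈ Finset.range (n + 1), c (2 * n + 2 - r) * s.Bc r) / sc
  let p : ℂ := sc / s.sp
  let q : ℂ := s.tp - tc
  ⟨s.Bc,
    fun r => if r = 0 then 1 else if r < 0 then 0
      else s.Bc r + q * s.Bc (r - 1) - p * s.Bp (r - 2),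
    sc, tc⟩

/-- Gragg's algorithm iterated from the initial conditions
`σ_{−1} = B_0(0) = 1`, `τ_{−1} = 0`. -/
noncomputable def gst (c : ℕ → ℂ) : ℕ → GState
  | 0 => ⟨0, fun r => if r = 0 then 1 else 0, 1, 0⟩
  | n + 1 => gstep c n (gst c n)

/-- The coefficient `p_n` produced by Gragg's algorithm: `p_{n+1} = σ_n/σ_{n−1}`. -/
noncomputable def graggP (c : ℕ → ℂ) (n : ℕ) : ℂ := (gst c n).sp / (gst c (n - 1)).sp

/-- The coefficient `q_n` produced by Gragg's algorithm: `q_{n+1} = τ_{n−1} − τ_n`. -/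
noncomputable def graggQ (c : ℕ → ℂ) (n : ℕ) : ℂ := (gst c (n - 1)).tp - (gst c n).tp

/-- The `n × n` Hankel determinant `H(n) = det (c_{i+j−1})_{1≤i,j≤n}`. -/
def hankel (c : ℕ → ℂ) (n : ℕ) : ℂ :=
  Matrix.det (Matrix.of fun i j : Fin n => c (i.1 + j.1 + 1))


/-- Tails of the A-fraction
`p_1 z/(1+q_1 z) − p_2 z²/(1+q_2 z) − p_3 z²/(1+q_3 z) − ⋯` built from the
coefficients produced by Gragg's algorithm, as formal power series. -/
noncomputable def graggTail (c : ℕ → ℂ) : ℕ → ℕ → PowerSeries ℂ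
  | 0, _ => 0
  | fuel + 1, k =>
    PowerSeries.C (graggP c k) * PowerSeries.X ^ 2 *
      (1 + PowerSeries.C (graggQ c k) * PowerSeries.X -
        graggTail c fuel (k + 1))⁻¹

/-- The `n`-th approximant `F^{(n)}` of the A-fraction built from Gragg's
algorithm, as a formal power series. -/
noncomputable def graggApprox (c : ℕ → ℂ) (n : ℕ) : PowerSeries ℂ :=
  PowerSeries.C (graggP c 1) * PowerSeries.X *
    (1 + PowerSeries.C (graggQ c 1) * PowerSeries.X -
      graggTail c (n - 1) 2)⁻¹

/-!
Let `Q_n(z) = Σ_r B_n(r) z^r` and let `A_n` be the numerator of the `n`-th approximant, so that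
`F^{(n)} = A_n / Q_n`. Both satisfy the three-term recurrence
`y_{n+1} = (1 + q_{n+1} z) y_n - p_{n+1} z² y_{n-1}`, hence so does the residual
`R_n = P Q_n - A_n`. As `A_n` and `Q_n` have degree at most `n`, the coefficients of `z^{2n+1}`
and `z^{2n+2}` in `R_n` are `σ_n` and `τ_n σ_n`, and Gragg's choice of `p_{n+2}` and `q_{n+2}` is
exactly what cancels the coefficients of `z^{2n+3}` and `z^{2n+4}` in `R_{n+2}`; so
`R_n = O(z^{2n+1})` by induction.
The induction needs `σ_n ≠ 0`: the vanishing of the coefficients of `z^{n+1}, …, z^{2n}` in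
`P Q_n` says that `(B_n(n), …, B_n(1))` solves the linear system bordering `H(n)`, and the
corresponding column operation gives `H(n+1) = H(n) σ_n`.
-/

open PowerSeries Matrix

theorem Matrix.det_fromBlocks_of_mulVec_eq_neg {ι R : Type*} [Fintype ι] [DecidableEq ι]
    [CommRing R] (A : Matrix ι ι R) (u v x : ι → R) (d : R) (hx : A *ᵥ x = -u) :
    (fromBlocks A (replicateCol (Fin 1) u) (replicateRow (Fin 1) v) (of fun _ _ => d)).det
      = A.det * (d + v ⬝ᵥ x) := by
  -- add the combination `x` of the first columns to the last one
  have hU : (fromBlocks 1 (replicateCol (Fin 1) x) 0 1 : Matrix (ι ⊕ Fin 1) (ι ⊕ Fin 1) R).det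
      = 1 := by
    rw [det_fromBlocks_zero₂₁, det_one, det_one, mul_one]
  have hprod : fromBlocks A (replicateCol (Fin 1) u) (replicateRow (Fin 1) v) (of fun _ _ => d)
        * fromBlocks 1 (replicateCol (Fin 1) x) 0 1
      = fromBlocks A 0 (replicateRow (Fin 1) v) (of fun _ _ => d + v ⬝ᵥ x) := by
    rw [fromBlocks_multiply, ← replicateCol_mulVec, hx, replicateRow_mul_replicateCol]
    congr 1 <;> ext i j <;> simp [add_comm]
  rw [← mul_one (det _), ← hU, ← det_mul, hprod, det_fromBlocks_zero₁₂, det_fin_one,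
    of_apply]

namespace PowerSeries

variable {R : Type*} [CommRing R]

noncomputable def threeTerm (q p : R) (f g : R⟦X⟧) : R⟦X⟧ :=
  (1 + C q * X) * f - C p * X ^ 2 * g

theorem coeff_threeTerm (q p : R) (f g : R⟦X⟧) (j : ℕ) :
    coeff j (threeTerm q p f g)
      = coeff j f + q * (if 1 ≤ j then coeff (j - 1) f else 0)
        - p * (if 2 ≤ j then coeff (j - 2) g else 0) := by
  rw [threeTerm, show (1 + C q * X) * f - C p * X ^ 2 * g
      = f + C q * (X ^ 1 * f) - C p * (X ^ 2 * g) by ring,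
    map_sub, map_add, coeff_C_mul, coeff_C_mul, coeff_X_pow_mul', coeff_X_pow_mul']

theorem constantCoeff_threeTerm (q p : R) (f g : R⟦X⟧) :
    constantCoeff (threeTerm q p f g) = constantCoeff f := by
  simp [threeTerm]

theorem X_pow_dvd_threeTerm {q p : R} {f g : R⟦X⟧} {m : ℕ} (hg : X ^ m ∣ g)
    (hf : X ^ (m + 2) ∣ f) (h₂ : coeff (m + 2) f = p * coeff m g)
    (h₃ : coeff (m + 3) f + q * coeff (m + 2) f = p * coeff (m + 1) g) :
    X ^ (m + 4) ∣ threeTerm q p f g := by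
  rw [X_pow_dvd_iff] at hf hg ⊢
  intro j hj
  rw [coeff_threeTerm]
  rcases lt_or_ge j (m + 2) with hj' | hj'
  · have h₁ : (if 1 ≤ j then coeff (j - 1) f else 0) = 0 := by
      split_ifs; exacts [hf _ (by omega), rfl]
    have h₂ : (if 2 ≤ j then coeff (j - 2) g else 0) = 0 := by
      split_ifs; exacts [hg _ (by omega), rfl]
    rw [hf j hj', h₁, h₂]; ring
  obtain rfl | rfl : j = m + 2 ∨ j = m + 3 := by omega
  · simp [hf (m + 1) (by omega), h₂]
  · simp [h₃]

theorem inv_mul_inv_eq_mul_inv {k : Type*} [Field k] {f g : k⟦X⟧} (hf : constantCoeff f ≠ 0)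
    (hg : constantCoeff g ≠ 0) : (f * g⁻¹)⁻¹ = g * f⁻¹ := by
  refine (PowerSeries.inv_eq_iff_mul_eq_one (by simp [hf, hg])).2 ?_
  rw [show g * f⁻¹ * (f * g⁻¹) = (f⁻¹ * f) * (g * g⁻¹) by ring,
    PowerSeries.inv_mul_cancel _ hf, PowerSeries.mul_inv_cancel _ hg, mul_one]

/-- The denominator of the tail `1 + q_k z - p_{k+1} z² / (1 + q_{k+1} z - ⋯)` with `m` partial
denominators, expanded from the front. -/
noncomputable def tailDenom (p q : ℕ → R) : ℕ → ℕ → R⟦X⟧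
  | 0, _ => 1
  | 1, k => 1 + C (q k) * X
  | m + 2, k =>
    threeTerm (q k) (p (k + 1)) (tailDenom p q (m + 1) (k + 1)) (tailDenom p q m (k + 2))

variable (p q : ℕ → R)

theorem constantCoeff_tailDenom : ∀ m k, constantCoeff (tailDenom p q m k) = 1
  | 0, _ => map_one _
  | 1, k => by simp [tailDenom]
  | m + 2, k => by
    rw [tailDenom, constantCoeff_threeTerm, constantCoeff_tailDenom (m + 1) (k + 1)]

theorem coeff_tailDenom_of_lt : ∀ m k {j}, m < j → coeff j (tailDenom p q m k) = 0
  | 0, k, j, hj => by simp [tailDenom, coeff_one, show j ≠ 0 by omega]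
  | 1, k, j, hj => by
    simp [tailDenom, coeff_one, coeff_X, show j ≠ 0 by omega, show j ≠ 1 by omega]
  | m + 2, k, j, hj => by
    rw [tailDenom, coeff_threeTerm, if_pos (by omega), if_pos (by omega),
      coeff_tailDenom_of_lt (m + 1) (k + 1) (by omega),
      coeff_tailDenom_of_lt (m + 1) (k + 1) (j := j - 1) (by omega),
      coeff_tailDenom_of_lt m (k + 2) (j := j - 2) (by omega)]
    ring

theorem tailDenom_add_two : ∀ m k, tailDenom p q (m + 2) k
    = threeTerm (q (k + m + 1)) (p (k + m + 1)) (tailDenom p q (m + 1) k) (tailDenom p q m k)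
  | 0, k => by simp only [tailDenom, threeTerm]; ring
  | 1, k => by simp only [tailDenom, threeTerm]; ring_nf
  | m + 2, k => by
    rw [tailDenom, tailDenom_add_two (m + 1) (k + 1), tailDenom_add_two m (k + 2),
      tailDenom.eq_3 p q k (m + 1), tailDenom.eq_3 p q k m]
    simp only [threeTerm, show k + 1 + (m + 1) + 1 = k + (m + 2) + 1 by omega,
      show k + 2 + m + 1 = k + (m + 2) + 1 by omega]
    ring

end PowerSeries

namespace Gragg

variable (c : ℕ → ℂ)

theorem gst_Bc_succ (n : ℕ) (r : ℤ) :
    (gst c (n + 1)).Bc r = if r = 0 then 1 else if r < 0 then 0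
      else (gst c n).Bc r + graggQ c (n + 1) * (gst c n).Bc (r - 1)
        - graggP c (n + 1) * (gst c n).Bp (r - 2) := rfl

theorem gst_Bp_succ (n : ℕ) : (gst c (n + 1)).Bp = (gst c n).Bc := rfl

theorem gst_Bc_zero (n : ℕ) : (gst c n).Bc 0 = 1 := by
  cases n <;> rfl

theorem gst_Bc_of_neg (n : ℕ) {r : ℤ} (hr : r < 0) : (gst c n).Bc r = 0 := by
  cases n with
  | zero => exact if_neg hr.ne
  | succ n => rw [gst_Bc_succ, if_neg hr.ne, if_pos hr]

theorem gst_Bc_of_lt : ∀ (n : ℕ) {r : ℤ}, (n : ℤ) < r → (gst c n).Bc r = 0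
  | 0, r, hr => if_neg (by omega)
  | n + 1, r, hr => by
    rw [gst_Bc_succ, if_neg (by omega), if_neg (by omega), gst_Bc_of_lt n (by omega),
      gst_Bc_of_lt n (r := r - 1) (by omega)]
    cases n with
    | zero => simp [gst]
    | succ n => rw [gst_Bp_succ, gst_Bc_of_lt n (by omega)]; ring

noncomputable def series : ℂ⟦X⟧ := mk fun r => if r = 0 then 0 else c r

noncomputable def denom (n : ℕ) : ℂ⟦X⟧ := mk fun r => (gst c n).Bc r

-- `σ_n` and `τ_n` are computed in the step from level `n` to `n + 1`.
noncomputable def sigma (n : ℕ) : ℂ := (gst c (n + 1)).sp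

noncomputable def tau (n : ℕ) : ℂ := (gst c (n + 1)).tp

theorem coeff_series (r : ℕ) : coeff r (series c) = if r = 0 then 0 else c r := coeff_mk _ _

theorem coeff_denom (n r : ℕ) : coeff r (denom c n) = (gst c n).Bc r := coeff_mk _ _

theorem denom_zero : denom c 0 = 1 := by
  ext r
  simp [coeff_denom, coeff_one, gst]

theorem denom_one : denom c 1 = 1 + C (graggQ c 1) * X := by
  ext (_ | _ | r)
  · simp [coeff_denom, gst_Bc_zero]
  · rw [coeff_denom, gst_Bc_succ]
    simp [gst]
  · rw [coeff_denom, gst_Bc_of_lt c 1 (by omega)]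
    simp [coeff_one]

theorem denom_add_two (n : ℕ) :
    denom c (n + 2)
      = threeTerm (graggQ c (n + 2)) (graggP c (n + 2)) (denom c (n + 1)) (denom c n) := by
  ext (_ | _ | r)
  · simp [coeff_threeTerm, coeff_denom, gst_Bc_zero]
  · simp [coeff_threeTerm, coeff_denom, gst_Bc_succ c (n + 1), gst_Bp_succ,
      gst_Bc_zero, gst_Bc_of_neg]
  · rw [coeff_threeTerm, coeff_denom, coeff_denom, coeff_denom, coeff_denom, gst_Bc_succ,
      gst_Bp_succ, if_neg (by omega), if_neg (by omega), if_pos (by omega), if_pos (by omega)]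
    push_cast
    ring_nf

theorem graggP_one : graggP c 1 = sigma c 0 := div_one _

theorem graggQ_one : graggQ c 1 = -tau c 0 := zero_sub _

theorem graggP_add_two (n : ℕ) : graggP c (n + 2) = sigma c (n + 1) / sigma c n := rfl

theorem graggQ_add_two (n : ℕ) : graggQ c (n + 2) = tau c n - tau c (n + 1) := rfl

theorem coeff_series_mul_denom (n : ℕ) {j : ℕ} (hj : n < j) :
    coeff j (series c * denom c n)
      = ∑ r ∈ Finset.range (n + 1), c (j - r) * (gst c n).Bc r := by
  rw [mul_comm, coeff_mul, Finset.Nat.sum_antidiagonal_eq_sum_range_succ_mk,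
    ← Finset.sum_subset (Finset.range_subset_range.2 (show n + 1 ≤ j + 1 by omega))]
  · refine Finset.sum_congr rfl fun r hr => ?_
    rw [coeff_denom, coeff_series, if_neg (by simp at hr; omega), mul_comm]
  · intro r _ hr
    rw [coeff_denom, gst_Bc_of_lt c n (by simp at hr; omega), zero_mul]

theorem coeff_series_mul_denom_two_mul_add_one (n : ℕ) :
    coeff (2 * n + 1) (series c * denom c n) = sigma c n :=
  coeff_series_mul_denom c n (by omega)

theorem coeff_series_mul_denom_two_mul_add_two {n : ℕ} (hσ : sigma c n ≠ 0) :
    coeff (2 * n + 2) (series c * denom c n) = tau c n * sigma c n := by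
  rw [coeff_series_mul_denom c n (by omega)]
  exact (div_mul_cancel₀ _ hσ).symm

theorem coeff_series_mul_denom_eq_border (n i : ℕ) :
    coeff (i + n + 1) (series c * denom c n)
      = c (i + n + 1) + ∑ j : Fin n, c (i + j + 1) * (gst c n).Bc (n - j) := by
  rw [coeff_series_mul_denom c n (by omega), Finset.sum_range_succ', add_comm,
    ← Finset.sum_range_reflect,
    Fin.sum_univ_eq_sum_range (fun j => c (i + j + 1) * (gst c n).Bc (n - j))]
  simp only [Nat.cast_zero, gst_Bc_zero, mul_one, Nat.sub_zero]
  congr 1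
  refine Finset.sum_congr rfl fun j hj => ?_
  rw [Finset.mem_range] at hj
  congr 2
  · omega
  · push_cast [show j ≤ n - 1 by omega, show 1 ≤ n by omega]; ring

def hankelMatrix (n : ℕ) : Matrix (Fin n) (Fin n) ℂ := of fun i j => c (i + j + 1)

theorem hankel_succ_of_mulVec_eq_neg (n : ℕ) (x : Fin n → ℂ)
    (hx : hankelMatrix c n *ᵥ x = -fun i : Fin n => c (i + n + 1)) :
    hankel c (n + 1)
      = hankel c n * (c (2 * n + 1) + (fun j : Fin n => c (n + j + 1)) ⬝ᵥ x) := by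
  rw [hankel, ← det_submatrix_equiv_self finSumFinEquiv]
  refine Eq.trans ?_ (det_fromBlocks_of_mulVec_eq_neg _ _ _ _ _ hx)
  congr 1
  ext (i | i) (j | j) <;> simp [two_mul]

theorem hankel_succ_eq_mul_sigma (n : ℕ)
    (hvan : ∀ j, n < j → j ≤ 2 * n → coeff j (series c * denom c n) = 0) :
    hankel c (n + 1) = hankel c n * sigma c n := by
  have hx : hankelMatrix c n *ᵥ (fun j : Fin n => (gst c n).Bc (n - j))
      = -fun i : Fin n => c (i + n + 1) := by
    funext i
    have hi := hvan (i + n + 1) (by omega) (by omega)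
    rw [coeff_series_mul_denom_eq_border] at hi
    simp only [mulVec, dotProduct, hankelMatrix, of_apply, Pi.neg_apply]
    linear_combination hi
  rw [hankel_succ_of_mulVec_eq_neg c n _ hx, ← coeff_series_mul_denom_two_mul_add_one, two_mul,
    coeff_series_mul_denom_eq_border]
  rfl

theorem constantCoeff_tailDenom_ne_zero (m k : ℕ) :
    constantCoeff (tailDenom (graggP c) (graggQ c) m k) ≠ 0 := by
  simp [constantCoeff_tailDenom]

theorem graggTail_eq : ∀ m k, 1 + C (graggQ c k) * X - graggTail c m (k + 1)
    = tailDenom (graggP c) (graggQ c) (m + 1) k * (tailDenom (graggP c) (graggQ c) m (k + 1))⁻¹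
  | 0, k => by simp [graggTail, tailDenom]
  | m + 1, k => by
    have hD := constantCoeff_tailDenom_ne_zero c
    rw [graggTail, graggTail_eq m (k + 1), inv_mul_inv_eq_mul_inv (hD _ _) (hD _ _),
      tailDenom.eq_3, eq_mul_inv_iff_mul_eq (hD _ _), threeTerm]
    linear_combination
      (-C (graggP c (k + 1)) * X ^ 2 * tailDenom (graggP c) (graggQ c) m (k + 2))
        * PowerSeries.mul_inv_cancel _ (hD (m + 1) (k + 1))

theorem denom_eq_tailDenom : ∀ n, denom c n = tailDenom (graggP c) (graggQ c) n 1
  | 0 => denom_zero c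
  | 1 => denom_one c
  | n + 2 => by
    rw [denom_add_two, tailDenom_add_two, denom_eq_tailDenom (n + 1), denom_eq_tailDenom n,
      add_comm 1 n]

noncomputable def numer : ℕ → ℂ⟦X⟧
  | 0 => 0
  | n + 1 => C (graggP c 1) * X * tailDenom (graggP c) (graggQ c) n 2

theorem numer_add_two (n : ℕ) :
    numer c (n + 2)
      = threeTerm (graggQ c (n + 2)) (graggP c (n + 2)) (numer c (n + 1)) (numer c n) := by
  rcases n with _ | n
  · simp only [numer, tailDenom, threeTerm]; ring
  · rw [numer, numer, numer, tailDenom_add_two, show 2 + n + 1 = n + 1 + 2 by omega]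
    simp only [threeTerm]; ring

theorem coeff_numer_of_lt {n j : ℕ} (hj : n < j) : coeff j (numer c n) = 0 := by
  rcases n with _ | n
  · simp [numer]
  · rw [numer, mul_assoc, coeff_C_mul, ← pow_one X, coeff_X_pow_mul', if_pos (by omega),
      coeff_tailDenom_of_lt _ _ n 2 (by omega), mul_zero]

theorem graggApprox_eq {n : ℕ} (hn : 1 ≤ n) :
    graggApprox c n = numer c n * (denom c n)⁻¹ := by
  obtain ⟨m, rfl⟩ : ∃ m, n = m + 1 := ⟨n - 1, by omega⟩
  have hD := constantCoeff_tailDenom_ne_zero c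
  rw [graggApprox, Nat.add_sub_cancel, graggTail_eq, inv_mul_inv_eq_mul_inv (hD _ _) (hD _ _),
    numer, denom_eq_tailDenom]
  ring

noncomputable def residual (n : ℕ) : ℂ⟦X⟧ := series c * denom c n - numer c n

theorem residual_add_two (n : ℕ) : residual c (n + 2)
    = threeTerm (graggQ c (n + 2)) (graggP c (n + 2)) (residual c (n + 1)) (residual c n) := by
  simp only [residual, denom_add_two, numer_add_two, threeTerm]
  ring

theorem coeff_residual_of_lt {n j : ℕ} (hj : n < j) :
    coeff j (residual c n) = coeff j (series c * denom c n) := by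
  rw [residual, map_sub, coeff_numer_of_lt c hj, sub_zero]

theorem sigma_ne_zero (hH : ∀ n : ℕ, 0 < n → hankel c n ≠ 0) {n : ℕ}
    (hR : X ^ (2 * n + 1) ∣ residual c n) : sigma c n ≠ 0 := by
  have hvan (j) (hj : n < j) (hj' : j ≤ 2 * n) : coeff j (series c * denom c n) = 0 := by
    rw [← coeff_residual_of_lt c hj]
    exact X_pow_dvd_iff.1 hR j (by omega)
  have hn : hankel c n ≠ 0 := by
    rcases n with _ | n
    · simp [hankel]
    · exact hH _ n.succ_pos
  intro h
  exact hH (n + 1) n.succ_pos (by rw [hankel_succ_eq_mul_sigma c n hvan, h, mul_zero])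

theorem coeff_residual_two_mul_add_one (n : ℕ) :
    coeff (2 * n + 1) (residual c n) = sigma c n := by
  rw [coeff_residual_of_lt c (by omega), coeff_series_mul_denom_two_mul_add_one]

theorem coeff_residual_two_mul_add_two {n : ℕ} (hσ : sigma c n ≠ 0) :
    coeff (2 * n + 2) (residual c n) = tau c n * sigma c n := by
  rw [coeff_residual_of_lt c (by omega), coeff_series_mul_denom_two_mul_add_two c hσ]

theorem X_pow_dvd_residual (hH : ∀ n : ℕ, 0 < n → hankel c n ≠ 0) :
    ∀ n, X ^ (2 * n + 1) ∣ residual c n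
  | 0 => by
    refine X_pow_dvd_iff.2 fun j hj => ?_
    simp [residual, denom_zero, numer, coeff_series, show j = 0 by omega]
  | 1 => by
    have hσ : sigma c 0 ≠ 0 := sigma_ne_zero c hH (X_pow_dvd_residual hH 0)
    have hc₁ : c 1 = sigma c 0 := by
      simpa [denom_zero, coeff_series] using coeff_series_mul_denom_two_mul_add_one c 0
    have hc₂ : c 2 = tau c 0 * sigma c 0 := by
      simpa [denom_zero, coeff_series] using coeff_series_mul_denom_two_mul_add_two c hσ
    have hR : residual c 1
        = series c - C (tau c 0) * (X ^ 1 * series c) - C (sigma c 0) * X := by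
      simp only [residual, denom_one, numer, tailDenom, graggP_one, graggQ_one, map_neg]
      ring
    refine X_pow_dvd_iff.2 fun j hj => ?_
    rw [hR]
    interval_cases j <;> simp [series, hc₁, hc₂]
  | n + 2 => by
    have h₀ := X_pow_dvd_residual hH n
    have h₁ := X_pow_dvd_residual hH (n + 1)
    have hσ₀ := sigma_ne_zero c hH h₀
    have hσ₁ := sigma_ne_zero c hH h₁
    have hs₁ := coeff_residual_two_mul_add_one c (n + 1)
    have ht₁ := coeff_residual_two_mul_add_two c hσ₁
    rw [residual_add_two]
    refine X_pow_dvd_threeTerm (m := 2 * n + 1) h₀ h₁ ?_ ?_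
    · rw [coeff_residual_two_mul_add_one, graggP_add_two, div_mul_cancel₀ _ hσ₀]
      exact hs₁
    · rw [coeff_residual_two_mul_add_two c hσ₀, graggP_add_two, graggQ_add_two,
        show 2 * n + 1 + 2 = 2 * (n + 1) + 1 by ring, hs₁,
        show 2 * n + 1 + 3 = 2 * (n + 1) + 2 by ring, ht₁]
      field_simp
      ring

end Gragg

/-- If the coefficients of the one-variable A-fraction are obtained from the
formal power series `P(z) = Σ_{r≥1} c_r z^r` by Gragg's algorithm, all Hankel
determinants being nonzero, then the Taylor expansion of the `n`-th approximant
`F^{(n)}` agrees with `P` through degree `2n`: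
`F^{(n)}(z) = Σ_{r=1}^{2n} c_r z^r + O(z^{2n+1})`. -/
theorem gragg_approx_correspondence (c : ℕ → ℂ)
    (hH : ∀ n : ℕ, 0 < n → hankel c n ≠ 0) :
    ∀ n : ℕ, 1 ≤ n → ∀ r : ℕ, r ≤ 2 * n →
      PowerSeries.coeff r (graggApprox c n) = if r = 0 then 0 else c r := by
  intro n hn r hr
  have hQ : constantCoeff (Gragg.denom c n) ≠ 0 := by
    rw [Gragg.denom_eq_tailDenom]
    exact Gragg.constantCoeff_tailDenom_ne_zero c n 1
  have hdiff : Gragg.series c - graggApprox c n = Gragg.residual c n * (Gragg.denom c n)⁻¹ := by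
    rw [Gragg.graggApprox_eq c hn, Gragg.residual, sub_mul, mul_assoc,
      PowerSeries.mul_inv_cancel _ hQ, mul_one]
  have hdvd : X ^ (2 * n + 1) ∣ Gragg.series c - graggApprox c n :=
    hdiff ▸ (Gragg.X_pow_dvd_residual c hH n).mul_right _
  have hr' := X_pow_dvd_iff.1 hdvd r (by omega)
  rw [map_sub, sub_eq_zero] at hr'
  rw [← hr', Gragg.coeff_series]
end

section
/- Under substitution z_i = 1/w_i for 1 ≤ i ≤ N and the equivalence transformation with factors ρ_{e_{i(k)}} = w_{i_k}, the n-th approximant f_n(z) of the multidimensional A-fraction with independent variables equals the n-th approximant f_n*(w) of the associated multidimensional J-fraction with independent variables, for every natural number n. -/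
/-- Tails of the multidimensional A-fraction with independent variables,
evaluated at a point `z ∈ ℂ^N`: below the branch `l = [i_k, …, i_1]`
(head = innermost index), to depth `fuel`,
`Σ_{i_{k+1} ≤ i_k} (−1)^{δ_{i_k,i_{k+1}}} p(i(k+1)) z_{i_k} z_{i_{k+1}} /
(1 + q(i(k+1)) z_{i_{k+1}} + tail)`. -/
noncomputable def tailA {N : ℕ} (p q : List (Fin N) → ℂ) :
    ℕ → List (Fin N) → (Fin N → ℂ) → ℂ
  | 0, _, _ => 0
  | fuel + 1, l, z =>
    match l with
    | [] => 0
    | ik :: _ =>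
      ∑ j ∈ Finset.Iic ik,
        ((if j = ik then -1 else 1) * p (j :: l) * z ik * z j) /
          (1 + q (j :: l) * z j + tailA p q fuel (j :: l) z)

/-- The `n`-th approximant of the multidimensional A-fraction with independent
variables. -/
noncomputable def approxA {N : ℕ} (p q : List (Fin N) → ℂ) (n : ℕ)
    (z : Fin N → ℂ) : ℂ :=
  ∑ i : Fin N, p [i] * z i / (1 + q [i] * z i + tailA p q (n - 1) [i] z)

/-- Tails of the associated multidimensional J-fraction with independent
variables, obtained by `z_i = 1/w_i` and the equivalence transformation with
factors `ρ_{e_{i(k)}} = w_{i_k}`. -/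
noncomputable def tailJ {N : ℕ} (p q : List (Fin N) → ℂ) :
    ℕ → List (Fin N) → (Fin N → ℂ) → ℂ
  | 0, _, _ => 0
  | fuel + 1, l, w =>
    match l with
    | [] => 0
    | ik :: _ =>
      ∑ j ∈ Finset.Iic ik,
        ((if j = ik then -1 else 1) * p (j :: l)) /
          (q (j :: l) + w j + tailJ p q fuel (j :: l) w)

/-- The `n`-th approximant of the multidimensional J-fraction with independent
variables. -/
noncomputable def approxJ {N : ℕ} (p q : List (Fin N) → ℂ) (n : ℕ)
    (w : Fin N → ℂ) : ℂ :=
  ∑ i : Fin N, p [i] / (q [i] + w i + tailJ p q (n - 1) [i] w)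

/-! Under `z_i = 1/w_i`, every tail of the A-fraction below a branch ending in `i_k` is the
corresponding tail of the J-fraction divided by `w_{i_k}`: multiplying numerator and denominator
of each partial fraction by `w_{i_{k+1}}` (the equivalence transformation) turns the A-term into
the J-term, and the claim follows by induction on the depth. -/

theorem mul_one_div_div_one_add_div {K : Type*} [Field K] (x q t b : K) (hb : b ≠ 0) :
    x * (1 / b) / (1 + q * (1 / b) + t / b) = x / (q + b + t) := by
  calc x * (1 / b) / (1 + q * (1 / b) + t / b)
      = x * (1 / b) / ((q + b + t) * (1 / b)) := by
        congr 1
        field_simp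
        ring
    _ = x / (q + b + t) := mul_div_mul_right x _ (one_div_ne_zero hb)

theorem tailA_one_div_eq_tailJ_div {N : ℕ} (p q : List (Fin N) → ℂ) (w : Fin N → ℂ)
    (hw : ∀ i, w i ≠ 0) (fuel : ℕ) (ik : Fin N) (l : List (Fin N)) :
    tailA p q fuel (ik :: l) (fun i => 1 / w i) = tailJ p q fuel (ik :: l) w / w ik := by
  induction fuel generalizing ik l with
  | zero => simp [tailA, tailJ]
  | succ fuel ih =>
    simp only [tailA, tailJ, Finset.sum_div]
    refine Finset.sum_congr rfl fun j _ => ?_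
    rw [ih, mul_one_div_div_one_add_div _ _ _ _ (hw j), mul_one_div, div_div, div_div,
      mul_comm (w ik)]

theorem approxA_eq_approxJ_general {N : ℕ} (p q : List (Fin N) → ℂ)
    (w : Fin N → ℂ) (hw : ∀ i, w i ≠ 0)
    (n : ℕ) :
    approxA p q n (fun i => 1 / w i) = approxJ p q n w := by
  refine Finset.sum_congr rfl fun i _ => ?_
  rw [tailA_one_div_eq_tailJ_div p q w hw, mul_one_div_div_one_add_div _ _ _ _ (hw i)]

/-- Under the substitution `z_i = 1/w_i` and the equivalence transformation
with factors `ρ_{e_{i(k)}} = w_{i_k}`, the `n`-th approximant of the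
multidimensional A-fraction equals the `n`-th approximant of the associated
multidimensional J-fraction, for every `n`. -/
theorem approxA_eq_approxJ {N : ℕ} (p q : List (Fin N) → ℂ)
    (hp : ∀ l : List (Fin N), p l ≠ 0) (w : Fin N → ℂ) (hw : ∀ i, w i ≠ 0)
    (n : ℕ) (hn : 1 ≤ n) :
    approxA p q n (fun i => 1 / w i) = approxJ p q n w :=
  approxA_eq_approxJ_general p q w hw n
end

section
/- The Hankel determinants H(n) of the formal power series arctan(z) = Σ_{k=1}^∞ (−1)^{k+1} z^{2k−1}/(2k−1) are nonzero for all n ≥ 1, and Gragg's algorithm applied to this series produces coefficients p_1 = 1, p_k = −(k−1)²/((2k−3)(2k−1)) for k ≥ 2, and q_k = 0 for all k ≥ 1. -/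
/-- The Taylor coefficients of `arctan`: `c_{2k−1} = (−1)^{k+1}/(2k−1)`,
`c_{2k} = 0` (for `r = 2k−1` one has `k = (r+1)/2`). -/
noncomputable def arctanCoeff (r : ℕ) : ℂ :=
  if r % 2 = 1 then (-1) ^ ((r + 1) / 2 + 1) / (r : ℂ) else 0

/-!
Substituting `z = i x`, the coefficients of `arctan` are the moments of the Legendre weight:
`c_{k+1} = i^k · ½ ∫_{-1}^{1} x^k dx`. Hence the Hankel matrix is `D M D` with `D = diag(i^k)` and
`M` the moment matrix of `½ dx` on `[-1, 1]`, which is positive definite because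
`vᵀ M v = ½ ∫ (Σ v_k x^k)²`.

Gragg's algorithm for `arctan` reproduces the three-term recurrence of the monic Legendre
polynomials: `q_n = 0` and `p_{n+1} = -β_n` with `β_n = n² / ((2n-1)(2n+1))`. To see this, let
`B_n` be given by that recurrence and consider the moments `Σ_r c_{2m+1-r} B_n(r)`. They satisfy
the same three-term recurrence in `n`, which identifies them with an explicit hypergeometric term;
on the diagonal `m = n` this is `σ_n`, and `σ_n / σ_{n-1} = -β_n`. Moreover `τ_n = 0`, since `c`
is odd and `B_n` is even.
-/

open Finset MeasureTheory
-- lets `positivity`, hence `field_simp`, discharge side goals such as `2 * (n : ℂ) + 1 ≠ 0`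
open scoped ComplexOrder

lemma gstep_of_tau_eq_zero (c : ℕ → ℂ) (n : ℕ) (Bp Bc : ℤ → ℂ) (sp σ : ℂ)
    (hσ : ∑ r ∈ range (n + 1), c (2 * n + 1 - r) * Bc r = σ)
    (hτ : ∑ r ∈ range (n + 1), c (2 * n + 2 - r) * Bc r = 0) :
    gstep c n ⟨Bp, Bc, sp, 0⟩ =
      ⟨Bc, fun r => if r = 0 then 1 else if r < 0 then 0 else Bc r - σ / sp * Bp (r - 2),
        σ, 0⟩ := by
  simp only [gstep, hσ, hτ, zero_div, sub_zero, zero_mul, add_zero]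

open Polynomial in
lemma integral_eval_sq_pos {a b : ℝ} (hab : a < b) {p : ℝ[X]} (hp : p ≠ 0) :
    0 < ∫ x in a..b, p.eval x ^ 2 := by
  obtain ⟨x, hx, hroot⟩ := (Set.Icc_infinite hab).exists_notMem_finset p.roots.toFinset
  have hx₀ : p.eval x ≠ 0 := by simpa [hp] using hroot
  exact intervalIntegral.integral_pos hab (p.continuous.pow 2).continuousOn
    (fun _ _ => sq_nonneg _) ⟨x, hx, by positivity⟩

noncomputable def intervalMomentMatrix (a b : ℝ) (n : ℕ) : Matrix (Fin n) (Fin n) ℝ :=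
  Matrix.of fun i j => ∫ x in a..b, x ^ (i + j : ℕ)

open Matrix in
lemma dotProduct_intervalMomentMatrix_mulVec (a b : ℝ) {n : ℕ} (v : Fin n → ℝ) :
    v ⬝ᵥ intervalMomentMatrix a b n *ᵥ v = ∫ x in a..b, (∑ i, v i * x ^ (i : ℕ)) ^ 2 := by
  have hint (i j : Fin n) :
      IntervalIntegrable (fun x : ℝ => v i * v j * x ^ (i + j : ℕ)) volume a b :=
    (by fun_prop : Continuous _).intervalIntegrable _ _
  calc v ⬝ᵥ intervalMomentMatrix a b n *ᵥ v
      = ∑ i, ∑ j, ∫ x in a..b, v i * v j * x ^ (i + j : ℕ) := by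
        simp only [dotProduct, mulVec, intervalMomentMatrix, of_apply, mul_sum,
          intervalIntegral.integral_const_mul]
        exact sum_congr rfl fun i _ => sum_congr rfl fun j _ => by ring
    _ = ∫ x in a..b, ∑ i, ∑ j, v i * v j * x ^ (i + j : ℕ) := by
        rw [intervalIntegral.integral_finsetSum (f := fun i x => ∑ j, v i * v j * x ^ (i + j : ℕ))
          fun i _ => (by fun_prop : Continuous _).intervalIntegrable _ _]
        exact sum_congr rfl fun i _ =>
          (intervalIntegral.integral_finsetSum fun j _ => hint i j).symm
    _ = _ := by
        congr 1 with x
        rw [sq, sum_mul_sum]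
        exact sum_congr rfl fun i _ => sum_congr rfl fun j _ => by ring

open Polynomial in
theorem posDef_intervalMomentMatrix {a b : ℝ} (hab : a < b) (n : ℕ) :
    (intervalMomentMatrix a b n).PosDef := by
  refine Matrix.posDef_iff_dotProduct_mulVec.2 ⟨?_, fun v hv => ?_⟩
  · ext i j
    simp [intervalMomentMatrix, add_comm]
  · set p : ℝ[X] := ∑ i, C (v i) * X ^ (i : ℕ)
    have hp : p ≠ 0 := by
      contrapose! hv
      ext i
      simpa [p, coeff_X_pow, Fin.val_inj] using congr_arg (coeff · i) hv
    simpa [dotProduct_intervalMomentMatrix_mulVec, p, eval_finsetSum] using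
      integral_eval_sq_pos hab hp

lemma arctanCoeff_of_even {r : ℕ} (hr : Even r) : arctanCoeff r = 0 := by
  rw [arctanCoeff, if_neg (by rw [Nat.even_iff] at hr; omega)]

lemma arctanCoeff_two_mul_add_one (k : ℕ) :
    arctanCoeff (2 * k + 1) = (-1) ^ k / (2 * k + 1) := by
  rw [arctanCoeff, if_pos (by omega), show (2 * k + 1 + 1) / 2 + 1 = k + 2 by omega, pow_add]
  push_cast
  ring

lemma arctanCoeff_two_mul_add_three (k : ℕ) :
    arctanCoeff (2 * k + 3) = -((2 * k + 1) / (2 * k + 3)) * arctanCoeff (2 * k + 1) := by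
  rw [arctanCoeff_two_mul_add_one, show 2 * k + 3 = 2 * (k + 1) + 1 by ring,
    arctanCoeff_two_mul_add_one]
  push_cast
  rw [show 2 * ((k : ℂ) + 1) + 1 = 2 * k + 3 by ring, pow_succ]
  field_simp

lemma arctanCoeff_succ_eq_integral (k : ℕ) :
    arctanCoeff (k + 1) = Complex.I ^ k * ((2⁻¹ * ∫ x in (-1 : ℝ)..1, x ^ k : ℝ) : ℂ) := by
  rw [integral_pow]
  rcases Nat.even_or_odd k with ⟨j, rfl⟩ | ⟨j, rfl⟩
  · rw [← two_mul, arctanCoeff_two_mul_add_one, pow_mul, Complex.I_sq, Odd.neg_one_pow ⟨j, rfl⟩]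
    push_cast
    field_simp
    ring
  · rw [show 2 * j + 1 + 1 = 2 * (j + 1) by ring, arctanCoeff_of_even (even_two_mul _),
      Even.neg_one_pow (even_two_mul _)]
    simp

lemma hankel_arctanCoeff_ne_zero (n : ℕ) : hankel arctanCoeff n ≠ 0 := by
  set D : Matrix (Fin n) (Fin n) ℂ := Matrix.diagonal fun i => Complex.I ^ (i : ℕ)
  have hfactor : (Matrix.of fun i j : Fin n => arctanCoeff (i + j + 1)) =
      D * ((2⁻¹ : ℝ) • intervalMomentMatrix (-1) 1 n).map Complex.ofReal * D := by
    ext i j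
    simp only [D, Matrix.mul_diagonal, Matrix.diagonal_mul, Matrix.of_apply, Matrix.map_apply,
      intervalMomentMatrix, Matrix.smul_of, Pi.smul_apply, smul_eq_mul, arctanCoeff_succ_eq_integral,
      pow_add, Complex.ofReal_mul, Complex.ofReal_inv, Complex.ofReal_ofNat]
    ring
  have hM : (intervalMomentMatrix (-1) 1 n).det ≠ 0 :=
    (posDef_intervalMomentMatrix (by norm_num) n).det_pos.ne'
  have hdet : (((2⁻¹ : ℝ) • intervalMomentMatrix (-1) 1 n).map Complex.ofReal).det =
      (((2⁻¹ : ℝ) • intervalMomentMatrix (-1) 1 n).det : ℂ) :=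
    (Complex.ofRealHom.map_det _).symm
  rw [hankel, hfactor, Matrix.det_mul, Matrix.det_mul, hdet]
  simp [D, hM, prod_ne_zero_iff, Complex.I_ne_zero]

noncomputable def legendreBeta (n : ℕ) : ℂ := (n : ℂ) ^ 2 / ((2 * n - 1) * (2 * n + 1))

lemma legendreBeta_succ (n : ℕ) :
    legendreBeta (n + 1) = (n + 1) ^ 2 / ((2 * n + 1) * (2 * n + 3)) := by
  rw [legendreBeta]
  push_cast
  ring_nf

noncomputable def arctanB : ℕ → ℤ → ℂ
  | 0, r => if r = 0 then 1 else 0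
  | 1, r => if r = 0 then 1 else 0
  | n + 2, r => arctanB (n + 1) r + legendreBeta (n + 1) * arctanB n (r - 2)

lemma arctanB_of_neg : ∀ (n : ℕ) {r : ℤ}, r < 0 → arctanB n r = 0
  | 0, _, h | 1, _, h => if_neg h.ne
  | n + 2, r, h => by
    rw [arctanB, arctanB_of_neg (n + 1) h, arctanB_of_neg n (by omega), mul_zero, add_zero]

lemma arctanB_zero_right : ∀ n : ℕ, arctanB n 0 = 1
  | 0 | 1 => rfl
  | n + 2 => by
    rw [arctanB, arctanB_zero_right (n + 1), arctanB_of_neg n (by norm_num), mul_zero, add_zero]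

lemma arctanB_of_lt : ∀ (n : ℕ) {r : ℤ}, n < r → arctanB n r = 0
  | 0, _, h | 1, _, h => if_neg (by omega)
  | n + 2, r, h => by
    rw [arctanB, arctanB_of_lt (n + 1) (by omega), arctanB_of_lt n (by omega), mul_zero, add_zero]

lemma arctanB_of_odd : ∀ (n : ℕ) {r : ℤ}, Odd r → arctanB n r = 0
  | 0, _, h | 1, _, h => if_neg (by rintro rfl; exact Int.not_odd_zero h)
  | n + 2, r, h => by
    rw [arctanB, arctanB_of_odd (n + 1) h, arctanB_of_odd n (by simpa [Int.odd_sub] using h),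
      mul_zero, add_zero]

lemma arctanB_add_two_eq_ite (n : ℕ) (r : ℤ) :
    arctanB (n + 2) r = if r = 0 then 1 else if r < 0 then 0
      else arctanB (n + 1) r + legendreBeta (n + 1) * arctanB n (r - 2) := by
  split_ifs with h₀ hneg
  · rw [h₀, arctanB_zero_right]
  · exact arctanB_of_neg _ hneg
  · rfl

-- `σ_n = arctanMoment n n`
noncomputable def arctanMoment (n m : ℕ) : ℂ :=
  ∑ r ∈ range (n + 1), arctanCoeff (2 * m + 1 - r) * arctanB n r

lemma arctanMoment_add_two (n m : ℕ) :
    arctanMoment (n + 2) (m + 1) =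
      arctanMoment (n + 1) (m + 1) + legendreBeta (n + 1) * arctanMoment n m := by
  have hfirst : ∑ r ∈ range (n + 3), arctanCoeff (2 * (m + 1) + 1 - r) * arctanB (n + 1) r =
      arctanMoment (n + 1) (m + 1) := by
    rw [sum_range_succ, arctanB_of_lt (n + 1) (by omega), mul_zero, add_zero]
    rfl
  have hshift : ∑ r ∈ range (n + 3), arctanCoeff (2 * (m + 1) + 1 - r) * arctanB n (r - 2) =
      arctanMoment n m := by
    rw [sum_range_succ', sum_range_succ', arctanB_of_neg n (by norm_num),
      arctanB_of_neg n (by norm_num), mul_zero, add_zero, mul_zero, add_zero]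
    refine sum_congr rfl fun r _ => ?_
    rw [show 2 * (m + 1) + 1 - (r + 1 + 1) = 2 * m + 1 - r by omega]
    push_cast
    ring_nf
  calc arctanMoment (n + 2) (m + 1)
      = (∑ r ∈ range (n + 3), arctanCoeff (2 * (m + 1) + 1 - r) * arctanB (n + 1) r) +
          legendreBeta (n + 1) *
            ∑ r ∈ range (n + 3), arctanCoeff (2 * (m + 1) + 1 - r) * arctanB n (r - 2) := by
        simp only [arctanMoment, arctanB, mul_add, sum_add_distrib, mul_sum, mul_left_comm]
    _ = _ := by rw [hfirst, hshift]

lemma sum_arctanCoeff_even_mul_arctanB_eq_zero (n : ℕ) :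
    ∑ r ∈ range (n + 1), arctanCoeff (2 * n + 2 - r) * arctanB n r = 0 := by
  refine sum_eq_zero fun r hr => ?_
  rcases Nat.even_or_odd r with ⟨k, rfl⟩ | hodd
  · rw [arctanCoeff_of_even ⟨n + 1 - k, by grind⟩, zero_mul]
  · rw [arctanB_of_odd n (by exact_mod_cast hodd.natCast), mul_zero]

/-- `(-1)^(n+d) 4^n n!² (n+d)! (n+2d)! / ((2n)! d! (2n+2d+1)!)`, defined through its ratios. -/
noncomputable def arctanMomentFormula : ℕ → ℕ → ℂ
  | 0, d => arctanCoeff (2 * d + 1)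
  | n + 1, d => -((n + 1) * (n + 2 * d + 1) / ((2 * n + 1) * (2 * n + 2 * d + 3))) *
      arctanMomentFormula n d

lemma arctanMomentFormula_succ_right (n d : ℕ) :
    arctanMomentFormula n (d + 1) =
      -((n + 2 * d + 1) * (n + 2 * d + 2) / (2 * (d + 1) * (2 * n + 2 * d + 3))) *
        arctanMomentFormula n d := by
  induction n with
  | zero =>
    rw [arctanMomentFormula, arctanMomentFormula, show 2 * (d + 1) + 1 = 2 * d + 3 by ring,
      arctanCoeff_two_mul_add_three]
    push_cast
    field_simp
    ring
  | succ n ih =>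
    rw [arctanMomentFormula, arctanMomentFormula, ih]
    push_cast
    field_simp
    ring

lemma arctanMomentFormula_add_two (n d : ℕ) :
    arctanMomentFormula (n + 2) d = arctanMomentFormula (n + 1) (d + 1) +
      legendreBeta (n + 1) * arctanMomentFormula n (d + 1) := by
  simp only [arctanMomentFormula, arctanMomentFormula_succ_right, legendreBeta_succ]
  push_cast
  field_simp
  ring

lemma arctanMomentFormula_succ_zero (n : ℕ) :
    arctanMomentFormula (n + 1) 0 = -legendreBeta (n + 1) * arctanMomentFormula n 0 := by
  rw [arctanMomentFormula, legendreBeta_succ]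
  push_cast
  ring_nf

lemma arctanMomentFormula_zero_right_ne_zero : ∀ n : ℕ, arctanMomentFormula n 0 ≠ 0
  | 0 => by simp [arctanMomentFormula, arctanCoeff]
  | n + 1 => by
    rw [arctanMomentFormula]
    refine mul_ne_zero (neg_ne_zero.2 (div_ne_zero ?_ ?_))
      (arctanMomentFormula_zero_right_ne_zero n) <;> positivity

lemma arctanMoment_eq_formula : ∀ n d : ℕ, arctanMoment n (n + d) = arctanMomentFormula n d
  | 0, d => by simp [arctanMoment, arctanB, arctanMomentFormula]
  | 1, d => by
    rw [arctanMoment, sum_range_succ, sum_range_one, Nat.cast_zero, Nat.cast_one,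
      arctanB_zero_right, arctanB_of_odd 1 odd_one, arctanMomentFormula, arctanMomentFormula,
      show 2 * (1 + d) + 1 - 0 = 2 * d + 3 by omega, arctanCoeff_two_mul_add_three]
    push_cast
    ring
  | n + 2, d => by
    have h₁ := arctanMoment_eq_formula (n + 1) (d + 1)
    have h₀ := arctanMoment_eq_formula n (d + 1)
    rw [show n + 1 + (d + 1) = n + 1 + d + 1 by ring] at h₁
    rw [show n + (d + 1) = n + 1 + d by ring] at h₀
    rw [show n + 2 + d = n + 1 + d + 1 by ring, arctanMoment_add_two, h₁, h₀,
      arctanMomentFormula_add_two]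

theorem gst_arctanCoeff_succ (n : ℕ) :
    gst arctanCoeff (n + 1) = ⟨arctanB n, arctanB (n + 1), arctanMomentFormula n 0, 0⟩ := by
  induction n with
  | zero =>
    rw [gst, gst, gstep_of_tau_eq_zero _ _ _ _ _ 1 (by simp [arctanCoeff]) (by simp [arctanCoeff])]
    congr 1
    · funext r
      simp only [arctanB]
      split_ifs <;> simp
    · simp [arctanMomentFormula, arctanCoeff]
  | succ n ih =>
    rw [gst, ih, gstep_of_tau_eq_zero _ _ _ _ _ _ (arctanMoment_eq_formula (n + 1) 0)
      (sum_arctanCoeff_even_mul_arctanB_eq_zero _)]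
    congr 1
    funext r
    rw [arctanB_add_two_eq_ite, arctanMomentFormula_succ_zero,
      mul_div_cancel_right₀ _ (arctanMomentFormula_zero_right_ne_zero n)]
    ring_nf

lemma graggP_arctanCoeff_one : graggP arctanCoeff 1 = 1 := by
  rw [graggP, show gst arctanCoeff 1 = _ from gst_arctanCoeff_succ 0]
  simp [gst, arctanMomentFormula, arctanCoeff]

lemma graggP_arctanCoeff_add_two (n : ℕ) : graggP arctanCoeff (n + 2) = -legendreBeta (n + 1) := by
  rw [graggP, gst_arctanCoeff_succ, show n + 2 - 1 = n + 1 from rfl, gst_arctanCoeff_succ,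
    arctanMomentFormula_succ_zero,
    mul_div_cancel_right₀ _ (arctanMomentFormula_zero_right_ne_zero n)]

lemma gst_arctanCoeff_tp : ∀ n : ℕ, (gst arctanCoeff n).tp = 0
  | 0 => rfl
  | n + 1 => by rw [gst_arctanCoeff_succ]

/-- The Hankel determinants of the series of `arctan` are nonzero, and Gragg's
algorithm applied to this series produces `p_1 = 1`,
`p_k = −(k−1)²/((2k−3)(2k−1))` for `k ≥ 2`, and `q_k = 0` for all `k ≥ 1`. -/
theorem arctan_gragg :
    (∀ n : ℕ, 0 < n → hankel arctanCoeff n ≠ 0) ∧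
    graggP arctanCoeff 1 = 1 ∧
    (∀ k : ℕ, 2 ≤ k → graggP arctanCoeff k =
      -(((k : ℂ) - 1) ^ 2 / ((2 * (k : ℂ) - 3) * (2 * (k : ℂ) - 1)))) ∧
    (∀ k : ℕ, 1 ≤ k → graggQ arctanCoeff k = 0) := by
  refine ⟨fun n _ => hankel_arctanCoeff_ne_zero n, graggP_arctanCoeff_one, fun k hk => ?_,
    fun k _ => by rw [graggQ, gst_arctanCoeff_tp, gst_arctanCoeff_tp, sub_zero]⟩
  obtain ⟨n, rfl⟩ := Nat.exists_eq_add_of_le' hk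
  rw [graggP_arctanCoeff_add_two, legendreBeta_succ]
  push_cast
  ring_nf
end

section
/- Let P(z) = Σ_{r≥1} c_r z^r be an odd formal power series (c_{2k} = 0 for all k ≥ 1) such that Gragg's algorithm applied to P is well defined (all Hankel determinants nonzero). Then all coefficients q_n produced by the algorithm vanish: q_n = 0 for every n ≥ 1. -/
/-!
For odd `P` every `B_n` is an even polynomial and every `τ_n` vanishes. Indeed, in
`τ_n σ_n = Σ_r c_{2n+2−r} B_n(r)` an even `r` meets a coefficient of even index and an
odd `r` meets `B_n(r) = 0`; hence `q_{n+1} = τ_{n−1} − τ_n = 0`, and the recursion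
reduces to `B_{n+1}(r) = B_n(r) − p_{n+1} B_{n−1}(r−2)`, which keeps odd coefficients zero.
-/

open Finset

namespace GState

/-- `τ_{n−1} = 0` and both `B_{n−1}` and `B_n` vanish at odd arguments. -/
structure IsEven (s : GState) : Prop where
  tp_eq_zero : s.tp = 0
  Bp_odd : ∀ r : ℤ, Odd r → s.Bp r = 0
  Bc_odd : ∀ r : ℤ, Odd r → s.Bc r = 0

end GState

section OddSeries

variable {c : ℕ → ℂ} (hodd : ∀ k : ℕ, 1 ≤ k → c (2 * k) = 0)
include hodd

theorem sum_coeff_mul_eq_zero_of_odd {B : ℤ → ℂ} (hB : ∀ r : ℤ, Odd r → B r = 0) (n : ℕ) :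
    ∑ r ∈ range (n + 1), c (2 * n + 2 - r) * B r = 0 := by
  refine sum_eq_zero fun r hr => ?_
  obtain ⟨k, rfl⟩ | hr_odd := Nat.even_or_odd r
  · have hk : k ≤ n := by have := mem_range.mp hr; omega
    rw [show 2 * n + 2 - (k + k) = 2 * (n + 1 - k) by omega, hodd _ (by omega), zero_mul]
  · rw [hB r (by exact_mod_cast hr_odd), mul_zero]

theorem GState.IsEven.gstep {s : GState} (hs : s.IsEven) (n : ℕ) :
    (_root_.gstep c n s).IsEven := by
  have htau : (_root_.gstep c n s).tp = 0 := by
    simp only [_root_.gstep, sum_coeff_mul_eq_zero_of_odd hodd hs.Bc_odd, zero_div]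
  refine ⟨htau, hs.Bc_odd, fun r hr => ?_⟩
  have hr0 : r ≠ 0 := by rintro rfl; exact Int.not_odd_zero hr
  have hr2 : Odd (r - 2) := by simpa using hr.sub_even even_two
  simp only [_root_.gstep] at htau ⊢
  simp [hr0, htau, hs.tp_eq_zero, hs.Bc_odd r hr, hs.Bp_odd _ hr2]

theorem isEven_gst (n : ℕ) : (gst c n).IsEven := by
  induction n with
  | zero =>
    exact ⟨rfl, fun _ _ => rfl, fun r hr => if_neg (by rintro rfl; exact Int.not_odd_zero hr)⟩
  | succ n ih => exact ih.gstep hodd n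

end OddSeries

theorem gragg_odd_series_q_eq_zero_general (c : ℕ → ℂ)
    (hodd : ∀ k : ℕ, 1 ≤ k → c (2 * k) = 0) :
    ∀ n : ℕ, 1 ≤ n → graggQ c n = 0 := fun n _ => by
  rw [graggQ, (isEven_gst hodd (n - 1)).tp_eq_zero, (isEven_gst hodd n).tp_eq_zero, sub_zero]

/-- If `P(z) = Σ_{r≥1} c_r z^r` is an odd formal power series (`c_{2k} = 0` for
all `k ≥ 1`) and Gragg's algorithm applied to `P` is well defined (all Hankel
determinants nonzero), then all coefficients `q_n` produced by the algorithm
vanish: `q_n = 0` for every `n ≥ 1`. -/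
theorem gragg_odd_series_q_eq_zero (c : ℕ → ℂ)
    (hodd : ∀ k : ℕ, 1 ≤ k → c (2 * k) = 0)
    (hH : ∀ n : ℕ, 0 < n → hankel c n ≠ 0) :
    ∀ n : ℕ, 1 ≤ n → graggQ c n = 0 :=
  gragg_odd_series_q_eq_zero_general c hodd
end
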